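/- For every n ≥ 1, the number of dominating sets of the cycle C_{3n+1} of cardinality n+1 equals (n(3n+7)+2)/2. -/

import Mathlib

/-- The cycle graph `C_n` on vertex set `ZMod n`: two vertices are adjacent
iff they are distinct and differ by `1`. -/
def cycleG (n : ℕ) : SimpleGraph (ZMod n) where
  Adj u v := u ≠ v ∧ (u - v = 1 ∨ v - u = 1)
  symm := ⟨fun u v ⟨h1, h2⟩ => ⟨h1.symm, h2.symm⟩⟩
  loopless := ⟨fun u ⟨h, _⟩ => h rfl⟩

/-- `S` is a dominating set of `G`: every vertex not in `S` is adjacent to a vertex of `S`. -/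
def isDomSet {V : Type*} (G : SimpleGraph V) (S : Finset V) : Prop :=
  ∀ v, v ∉ S → ∃ u ∈ S, G.Adj u v

/-- `d(C_n, i)`: the number of dominating sets of `C_n` of cardinality `i`. -/
noncomputable def domCount (n i : ℕ) : ℕ :=
  Nat.card {S : Finset (ZMod n) // isDomSet (cycleG n) S ∧ S.card = i}


/-!
Anchoring a dominating set at one of its points and rotating the cycle gives
`(n + 1) * d = (3n + 1) * A`, where `A` counts the dominating sets of size `n + 1` containing `0`.
Read as offsets in `[0, 3n]`, such a set contains `0` and meets each block `{3j-2, 3j-1, 3j}`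
(`1 ≤ j ≤ n`), hence meets each block in exactly one point `3j - δⱼ`. Domination forces `δ` to be
nondecreasing, so the set is determined by the two places `r ≤ s` where `δ` jumps, and
`A = (n + 2).choose 2`.
-/

open Finset

lemma exists_forall_iff_le_of_succ_imp {P : ℕ → Prop} {n : ℕ} (h0 : P 0)
    (hP : ∀ j < n, P (j + 1) → P j) : ∃ r ≤ n, ∀ j ≤ n, (P j ↔ j ≤ r) := by
  induction n with
  | zero => exact ⟨0, le_rfl, fun j hj => iff_of_true (by rwa [Nat.le_zero.1 hj]) hj⟩
  | succ n ih =>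
    obtain ⟨r, hrn, hr⟩ := ih fun j hj => hP j (by omega)
    by_cases hn : P (n + 1)
    · have : n ≤ r := (hr n le_rfl).1 (hP n (by omega) hn)
      refine ⟨n + 1, le_rfl, fun j hj => iff_of_true ?_ hj⟩
      rcases hj.lt_or_eq with hj | rfl
      exacts [(hr j (by omega)).2 (by omega), hn]
    · refine ⟨r, by omega, fun j hj => ?_⟩
      rcases hj.lt_or_eq with hj | rfl
      exacts [hr j (by omega), iff_of_false hn (by omega)]

section Translation

variable {V W : Type*} {G : SimpleGraph V} {H : SimpleGraph W}

lemma isDomSet.map (e : G ≃g H) {S : Finset V} (hS : isDomSet G S) :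
    isDomSet H (S.map e.toEquiv.toEmbedding) := by
  intro w hw
  obtain ⟨u, hu, hadj⟩ := hS (e.symm w) fun h => hw (mem_map.2 ⟨_, h, e.apply_symm_apply w⟩)
  exact ⟨e u, mem_map_of_mem _ hu, by simpa using e.map_adj_iff.2 hadj⟩

variable {A : Type*} [AddGroup A]

def addRightIso (G : SimpleGraph A) (hG : ∀ a u v, G.Adj (u + a) (v + a) ↔ G.Adj u v) (a : A) :
    G ≃g G where
  toEquiv := Equiv.addRight a
  map_rel_iff' := hG a _ _

theorem card_mul_card_isDomSet [Fintype A] [DecidableEq A] (G : SimpleGraph A)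
    (hG : ∀ a u v, G.Adj (u + a) (v + a) ↔ G.Adj u v) (k : ℕ) :
    k * Nat.card {S : Finset A // isDomSet G S ∧ S.card = k} =
      Fintype.card A * Nat.card {S : Finset A // isDomSet G S ∧ S.card = k ∧ 0 ∈ S} := by
  classical
  simp only [Nat.card_eq_fintype_card, Fintype.card_subtype]
  set D := ({S | isDomSet G S ∧ S.card = k} : Finset (Finset A))
  have hanchor :
      ∀ a, #{S ∈ D | a ∈ S} = #({S | isDomSet G S ∧ S.card = k ∧ 0 ∈ S} : Finset _) := by
    intro a
    refine card_nbij' (·.map (addRightIso G hG (-a)).toEquiv.toEmbedding)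
      (·.map (addRightIso G hG a).toEquiv.toEmbedding) ?_ ?_ ?_ ?_
    · intro S hS
      simp only [D, coe_filter, Set.mem_ofPred_eq, mem_filter, mem_univ, true_and, card_map] at hS ⊢
      obtain ⟨⟨hS, hk⟩, ha⟩ := hS
      exact ⟨hS.map _, hk, mem_map.2 ⟨a, ha, by simp [addRightIso]⟩⟩
    · intro S hS
      simp only [D, coe_filter, Set.mem_ofPred_eq, mem_filter, mem_univ, true_and, card_map] at hS ⊢
      obtain ⟨hS, hk, h0⟩ := hS
      exact ⟨⟨hS.map _, hk⟩, mem_map.2 ⟨0, h0, by simp [addRightIso]⟩⟩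
    · intro S _
      ext x
      simp [addRightIso]
    · intro S _
      ext x
      simp [addRightIso]
  calc k * #D = ∑ S ∈ D, #S := by
        rw [sum_congr rfl fun S hS => (mem_filter.1 hS).2.2, sum_const, smul_eq_mul, mul_comm]
    _ = _ := sum_card hanchor

end Translation

section Cycle

variable {m : ℕ}

lemma cycleG_adj_add_right (a u v : ZMod m) :
    (cycleG m).Adj (u + a) (v + a) ↔ (cycleG m).Adj u v := by
  simp [cycleG]

lemma isDomSet_cycleG_iff (hm : m ≠ 1) {S : Finset (ZMod m)} :
    isDomSet (cycleG m) S ↔ ∀ v, v - 1 ∈ S ∨ v ∈ S ∨ v + 1 ∈ S := by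
  have h1 : (1 : ZMod m) ≠ 0 := by
    have := ZMod.nontrivial_iff.2 hm
    exact one_ne_zero
  have hadj : ∀ u v, (cycleG m).Adj u v ↔ u = v - 1 ∨ u = v + 1 := by
    intro u v
    simp only [cycleG]
    constructor
    · rintro ⟨-, h | h⟩
      · exact Or.inr (by linear_combination h)
      · exact Or.inl (by linear_combination -h)
    · rintro (rfl | rfl)
      · exact ⟨by simpa [sub_eq_self] using h1, by simp⟩
      · exact ⟨by simpa using h1, by simp⟩
  simp only [isDomSet, hadj]
  constructor
  · intro h v
    by_cases hv : v ∈ S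
    · exact Or.inr (Or.inl hv)
    · obtain ⟨u, hu, rfl | rfl⟩ := h v hv
      exacts [Or.inl hu, Or.inr (Or.inr hu)]
  · intro h v hv
    rcases h v with h | h | h
    exacts [⟨_, h, Or.inl rfl⟩, absurd h hv, ⟨_, h, Or.inr rfl⟩]

end Cycle

section Offsets

variable {m : ℕ} {O : Finset ℕ}

def MeetsTriples (m : ℕ) (O : Finset ℕ) : Prop :=
  ∀ u, u + 3 ≤ m → u ∈ O ∨ u + 1 ∈ O ∨ u + 2 ∈ O

lemma MeetsTriples.exists_mem (hW : MeetsTriples m O) {u : ℕ} (hu : u + 3 ≤ m) :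
    ∃ x ∈ O, u ≤ x ∧ x ≤ u + 2 := by
  rcases hW u hu with h | h | h
  exacts [⟨_, h, le_rfl, by omega⟩, ⟨_, h, by omega, by omega⟩, ⟨_, h, by omega, le_rfl⟩]

lemma natCast_injOn_range : Set.InjOn (Nat.cast : ℕ → ZMod m) (range m) := by
  intro x hx y hy h
  have := congrArg ZMod.val h
  rwa [ZMod.val_cast_of_lt (mem_range.1 hx), ZMod.val_cast_of_lt (mem_range.1 hy)] at this

lemma natCast_mem_image_natCast_iff (hO : O ⊆ range m) {x : ℕ} (hx : x < m) :
    (x : ZMod m) ∈ O.image Nat.cast ↔ x ∈ O := by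
  rw [← mem_coe, coe_image]
  exact natCast_injOn_range.mem_image_iff (coe_subset.2 hO) (mem_range.2 hx)

lemma image_val_image_natCast (hO : O ⊆ range m) :
    (O.image (Nat.cast : ℕ → ZMod m)).image ZMod.val = O := by
  rw [image_image]
  exact (image_congr fun x hx => ZMod.val_cast_of_lt (mem_range.1 (hO hx))).trans image_id

/-- For a set containing `0`, domination of the cycle only has to be checked away from `0`,
where no wrap-around occurs. -/
lemma isDomSet_image_natCast_iff (hm : 2 ≤ m) (hO : O ⊆ range m) (h0 : 0 ∈ O) :
    isDomSet (cycleG m) (O.image Nat.cast) ↔ MeetsTriples m O := by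
  have triple : ∀ u, u + 3 ≤ m →
      ((((u + 1 : ℕ) : ZMod m) - 1 ∈ O.image Nat.cast ∨ ((u + 1 : ℕ) : ZMod m) ∈ O.image Nat.cast ∨
        ((u + 1 : ℕ) : ZMod m) + 1 ∈ O.image Nat.cast) ↔ (u ∈ O ∨ u + 1 ∈ O ∨ u + 2 ∈ O)) := by
    intro u hu
    rw [show ((u + 1 : ℕ) : ZMod m) - 1 = (u : ℕ) by push_cast; ring,
      show ((u + 1 : ℕ) : ZMod m) + 1 = (u + 2 : ℕ) by push_cast; ring,
      natCast_mem_image_natCast_iff hO (by omega), natCast_mem_image_natCast_iff hO (by omega),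
      natCast_mem_image_natCast_iff hO (by omega)]
  have hzero : (0 : ZMod m) ∈ O.image Nat.cast := by
    simpa using mem_image_of_mem (Nat.cast : ℕ → ZMod m) h0
  rw [isDomSet_cycleG_iff (by omega)]
  refine ⟨fun h u hu => (triple u hu).1 (h _), fun h v => ?_⟩
  have : NeZero m := ⟨by omega⟩
  obtain ⟨w, hw, rfl⟩ : ∃ w < m, (w : ZMod m) = v := ⟨v.val, v.val_lt, v.natCast_zmod_val⟩
  rcases w with _ | u
  · exact Or.inr (Or.inl (by simpa using hzero))
  rcases (by omega : u + 2 = m ∨ u + 3 ≤ m) with hu | hu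
  · refine Or.inr (Or.inr ?_)
    rwa [show ((u + 1 : ℕ) : ZMod m) + 1 = (m : ℕ) by rw [← hu]; push_cast; ring,
      ZMod.natCast_self]
  · exact (triple u hu).2 (h u hu)

lemma card_anchored_isDomSet_cycleG (hm : 2 ≤ m) (k : ℕ) :
    Nat.card {S : Finset (ZMod m) // isDomSet (cycleG m) S ∧ S.card = k ∧ 0 ∈ S} =
      Nat.card {O : Finset ℕ // O ⊆ range m ∧ MeetsTriples m O ∧ O.card = k ∧ 0 ∈ O} := by
  have : NeZero m := ⟨by omega⟩
  have image_natCast_image_val (S : Finset (ZMod m)) : (S.image ZMod.val).image Nat.cast = S := by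
    simp [image_image, Function.comp_def]
  refine Nat.card_congr
    { toFun := fun S => ⟨S.1.image ZMod.val, ?_⟩
      invFun := fun O => ⟨O.1.image Nat.cast, ?_⟩
      left_inv := fun S => Subtype.ext (image_natCast_image_val S.1)
      right_inv := fun O => Subtype.ext (image_val_image_natCast O.2.1) }
  · obtain ⟨S, hS, hk, h0⟩ := S
    have hsub : S.image ZMod.val ⊆ range m := by simp [subset_iff, ZMod.val_lt]
    have h0' : 0 ∈ S.image ZMod.val := by simpa using mem_image_of_mem ZMod.val h0
    refine ⟨hsub, (isDomSet_image_natCast_iff hm hsub h0').1 ?_, ?_, h0'⟩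
    · rwa [image_natCast_image_val]
    · rwa [card_image_of_injective _ (ZMod.val_injective m)]
  · obtain ⟨O, hO, hW, hk, h0⟩ := O
    refine ⟨(isDomSet_image_natCast_iff hm hO h0).2 hW, ?_, ?_⟩
    · rw [card_image_of_injOn (natCast_injOn_range.mono (coe_subset.2 hO)), hk]
    · simpa using mem_image_of_mem (Nat.cast : ℕ → ZMod m) h0

end Offsets

section Blocks

variable {n : ℕ} {O : Finset ℕ}

/-- `range (3n+1)` is `{0}` together with the blocks `{3j-2, 3j-1, 3j}`, `1 ≤ j ≤ n`, i.e. the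
fibres of `x ↦ (x+2)/3`; every block is a triple, so `O` meets it. -/
lemma card_eq_iff_injOn_block (hO : O ⊆ range (3 * n + 1)) (hW : MeetsTriples (3 * n + 1) O)
    (h0 : 0 ∈ O) : O.card = n + 1 ↔ Set.InjOn (fun x => (x + 2) / 3) O := by
  have hmaps : Set.MapsTo (fun x => (x + 2) / 3) O (range (n + 1)) := fun x hx => by
    have := mem_range.1 (hO hx)
    simp only [coe_range, Set.mem_Iio]
    omega
  have hsurj : Set.SurjOn (fun x => (x + 2) / 3) O (range (n + 1)) := by
    rintro (_ | j) hj
    · exact ⟨0, h0, rfl⟩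
    · simp only [coe_range, Set.mem_Iio] at hj
      obtain ⟨x, hx, h1, h2⟩ := hW.exists_mem (u := 3 * j + 1) (by omega)
      exact ⟨x, hx, show (x + 2) / 3 = j + 1 by omega⟩
  constructor
  · intro hc
    exact injOn_of_surjOn_of_card_le _ hmaps hsurj (by simp [hc])
  · intro hinj
    rw [← card_image_of_injOn hinj, image_eq_iff_surjOn_mapsTo.2 ⟨hsurj, hmaps⟩, card_range]

/-- The set consisting of `0` and, in the block `{3j-2, 3j-1, 3j}`, of `3j` for `j ≤ r`,
of `3j-1` for `r < j ≤ s` and of `3j-2` for `s < j`. -/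
def blockSet (n r s : ℕ) : Finset ℕ :=
  {x ∈ range (3 * n + 1) |
    x % 3 = 0 ∧ x ≤ 3 * r ∨ x % 3 = 2 ∧ 3 * r < x ∧ x < 3 * s ∨ x % 3 = 1 ∧ 3 * s < x}

lemma zero_mem_blockSet (r s : ℕ) : 0 ∈ blockSet n r s := by
  simp [blockSet]

lemma meetsTriples_blockSet (r s : ℕ) : MeetsTriples (3 * n + 1) (blockSet n r s) := by
  intro u hu
  simp only [blockSet, mem_filter, mem_range]
  omega

lemma card_blockSet {r s : ℕ} (hrs : r ≤ s) : (blockSet n r s).card = n + 1 := by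
  refine (card_eq_iff_injOn_block (filter_subset _ _) (meetsTriples_blockSet r s)
    (zero_mem_blockSet r s)).2 fun x hx y hy h => ?_
  simp only [coe_filter, mem_range, Set.mem_ofPred_eq] at hx hy h
  omega

lemma blockSet_inj {r s r' s' : ℕ} (hs : s ≤ n) (hs' : s' ≤ n) (hr : r ≤ s) (hr' : r' ≤ s')
    (h : blockSet n r s = blockSet n r' s') : r = r' ∧ s = s' := by
  have mem_iff x : x ∈ blockSet n r s ↔ x ∈ blockSet n r' s' := by rw [h]
  simp only [blockSet, mem_filter, mem_range] at mem_iff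
  constructor
  · rcases lt_trichotomy r r' with hlt | heq | hlt
    · have := mem_iff (3 * r')
      omega
    · exact heq
    · have := mem_iff (3 * r)
      omega
  · rcases lt_trichotomy s s' with hlt | heq | hlt
    · have := mem_iff (3 * s' - 2)
      omega
    · exact heq
    · have := mem_iff (3 * s - 2)
      omega

lemma exists_eq_blockSet (hO : O ⊆ range (3 * n + 1)) (hW : MeetsTriples (3 * n + 1) O)
    (hc : O.card = n + 1) (h0 : 0 ∈ O) : ∃ r s, r ≤ s ∧ s ≤ n ∧ O = blockSet n r s := by
  have same_block : ∀ x ∈ O, ∀ y ∈ O, (x + 2) / 3 = (y + 2) / 3 → x = y :=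
    fun x hx y hy h => (card_eq_iff_injOn_block hO hW h0).1 hc hx hy h
  have h0' : 3 * 0 ∈ O := h0
  -- the point of `O` in block `j` is `3j - δⱼ` with `δ` nondecreasing
  have hP : ∀ j < n, 3 * (j + 1) ∈ O → 3 * j ∈ O := by
    intro j hj h
    obtain ⟨x, hx, h1, h2⟩ := hW.exists_mem (u := 3 * j) (by omega)
    obtain rfl : x = 3 * j := by
      by_contra hne
      have := same_block x hx _ h (by omega)
      omega
    exact hx
  have hQ : ∀ j < n, (3 * (j + 1) ∈ O ∨ 3 * (j + 1) - 1 ∈ O) → (3 * j ∈ O ∨ 3 * j - 1 ∈ O) := by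
    rintro j hj (h | h)
    · exact Or.inl (hP j hj h)
    rcases j with _ | j
    · exact Or.inl h0'
    obtain ⟨x, hx, h1, h2⟩ := hW.exists_mem (u := 3 * j + 2) (by omega)
    rcases (by omega : x = 3 * (j + 1) - 1 ∨ x = 3 * (j + 1) ∨ x = 3 * j + 4) with rfl | rfl | rfl
    · exact Or.inr hx
    · exact Or.inl hx
    · exact absurd (same_block _ hx _ h (by omega)) (by omega)
  obtain ⟨r, hrn, hr⟩ := exists_forall_iff_le_of_succ_imp (P := fun j => 3 * j ∈ O) h0' hP
  obtain ⟨s, hsn, hs⟩ :=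
    exists_forall_iff_le_of_succ_imp (P := fun j => 3 * j ∈ O ∨ 3 * j - 1 ∈ O) (Or.inl h0') hQ
  have hrs : r ≤ s := (hs r hrn).1 (Or.inl ((hr r hrn).2 le_rfl))
  refine ⟨r, s, hrs, hsn, (eq_of_subset_of_card_le ?_ (by rw [hc, card_blockSet hrs])).symm⟩
  intro x hx
  simp only [blockSet, mem_filter, mem_range] at hx
  rcases hx with ⟨hx, ⟨hx3, hxr⟩ | ⟨hx3, hrx, hxs⟩ | ⟨hx3, hsx⟩⟩
  · obtain ⟨j, rfl⟩ : ∃ j, x = 3 * j := ⟨x / 3, by omega⟩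
    exact (hr j (by omega)).2 (by omega)
  · obtain ⟨j, rfl⟩ : ∃ j, x = 3 * j - 1 := ⟨x / 3 + 1, by omega⟩
    rcases (hs j (by omega)).2 (by omega) with h | h
    · exact absurd ((hr j (by omega)).1 h) (by omega)
    · exact h
  · obtain ⟨j, rfl⟩ : ∃ j, x = 3 * j - 2 := ⟨x / 3 + 1, by omega⟩
    have hQj : ¬(3 * j ∈ O ∨ 3 * j - 1 ∈ O) := fun h => by
      have := (hs j (by omega)).1 h
      omega
    obtain ⟨y, hy, h1, h2⟩ := hW.exists_mem (u := 3 * j - 2) (by omega)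
    rcases (by omega : y = 3 * j - 2 ∨ y = 3 * j - 1 ∨ y = 3 * j) with rfl | rfl | rfl
    · exact hy
    · exact absurd (Or.inr hy) hQj
    · exact absurd (Or.inl hy) hQj

end Blocks

lemma card_meetsTriples_three_mul_add_one (n : ℕ) :
    Nat.card {O : Finset ℕ //
      O ⊆ range (3 * n + 1) ∧ MeetsTriples (3 * n + 1) O ∧ O.card = n + 1 ∧ 0 ∈ O} =
      (n + 2).choose 2 := by
  let f (p : {p : Fin (n + 1) × Fin (n + 1) // p.1 ≤ p.2}) :
      {O : Finset ℕ //
        O ⊆ range (3 * n + 1) ∧ MeetsTriples (3 * n + 1) O ∧ O.card = n + 1 ∧ 0 ∈ O} :=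
    ⟨blockSet n p.1.1 p.1.2, filter_subset _ _, meetsTriples_blockSet _ _, card_blockSet p.2,
      zero_mem_blockSet _ _⟩
  have hf : Function.Bijective f := by
    constructor
    · rintro ⟨⟨r, s⟩, hrs⟩ ⟨⟨r', s'⟩, hrs'⟩ h
      obtain ⟨hr, hs⟩ := blockSet_inj (Nat.lt_succ_iff.1 s.2) (Nat.lt_succ_iff.1 s'.2) hrs hrs'
        (congrArg Subtype.val h)
      simp only [Subtype.mk.injEq, Prod.mk.injEq]
      exact ⟨Fin.ext hr, Fin.ext hs⟩
    · rintro ⟨O, hO, hW, hc, h0⟩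
      obtain ⟨r, s, hrs, hsn, rfl⟩ := exists_eq_blockSet hO hW hc h0
      exact ⟨⟨(⟨r, by omega⟩, ⟨s, by omega⟩), hrs⟩, rfl⟩
  rw [← Nat.card_congr (Equiv.ofBijective f hf), Nat.card_eq_fintype_card,
    ← Fintype.card_congr Sym2.sortEquiv, Sym2.card, Fintype.card_fin]

theorem domCount_three_n_add_one (n : ℕ) (hn : 1 ≤ n) :
    domCount (3 * n + 1) (n + 1) = (n * (3 * n + 7) + 2) / 2 := by
  have hcount := card_mul_card_isDomSet (cycleG (3 * n + 1)) cycleG_adj_add_right (n + 1)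
  rw [card_anchored_isDomSet_cycleG (by omega), card_meetsTriples_three_mul_add_one,
    ZMod.card] at hcount
  have hchoose : (n + 2).choose 2 * 2 = (n + 2) * (n + 1) := by
    rw [← Nat.add_one_mul_choose_eq, Nat.choose_one_right]
  have htwice : 2 * domCount (3 * n + 1) (n + 1) = n * (3 * n + 7) + 2 := by
    apply Nat.eq_of_mul_eq_mul_left (Nat.add_one_pos n)
    unfold domCount
    linear_combination 2 * hcount + (3 * n + 1) * hchoose
  rw [← htwice, Nat.mul_div_cancel_left _ two_pos]
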